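/- Let G be a finite simple graph and let H be an induced subgraph of G. Then for every covering of H with k sets, there exists a covering of G with at least k sets; equivalently, χ̇(H) ≤ χ̇(G). -/

import Mathlib

/-- `I : Fin k → Set V` is a *covering* of the induced subgraph of `G` on the
vertex set `S`: the sets `I i` are nonempty, they partition `S`, each `I i`
is an independent set of `G`, and each `I i` is a *maximal* independent set
in the induced subgraph on `I i ∪ I (i+1) ∪ ... ∪ I (k-1)`, i.e. every vertex
of a later set that is not in `I i` has a neighbour in `I i`. -/
def IsCoveringOn {V : Type*} (G : SimpleGraph V) (S : Set V) {k : ℕ}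
    (I : Fin k → Set V) : Prop :=
  (∀ i, (I i).Nonempty) ∧
  (∀ i, I i ⊆ S) ∧
  (∀ v ∈ S, ∃! i, v ∈ I i) ∧
  (∀ i, ∀ v ∈ I i, ∀ w ∈ I i, ¬ G.Adj v w) ∧
  (∀ i j : Fin k, i ≤ j → ∀ v ∈ I j, v ∉ I i → ∃ w ∈ I i, G.Adj v w)

/-- `χ̇` of the induced subgraph of `G` on `S`: the maximal number of sets in a
covering of that induced subgraph. -/
noncomputable def chiDotOn {V : Type*} (G : SimpleGraph V) (S : Set V) : ℕ :=
  sSup {k | ∃ I : Fin k → Set V, IsCoveringOn G S I}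

/-- Prepending a suitable maximal independent set to a covering of the
complement gives a covering. -/
lemma prepend_covering {V : Type*} (G : SimpleGraph V) (U M : Set V)
    (hMU : M ⊆ U) (hMne : M.Nonempty)
    (hMind : ∀ v ∈ M, ∀ w ∈ M, ¬ G.Adj v w)
    (hdom : ∀ v ∈ U, v ∉ M → ∃ w ∈ M, G.Adj v w)
    {m : ℕ} {J : Fin m → Set V} (hJ : IsCoveringOn G (U \ M) J) :
    IsCoveringOn G U (Fin.cases M J : Fin (m + 1) → Set V) := by
  obtain ⟨hne, hsub, hpart, hind, hmax⟩ := hJ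
  refine ⟨?_, ?_, ?_, ?_, ?_⟩
  · intro i
    induction i using Fin.cases with
    | zero => simpa using hMne
    | succ i => simpa using hne i
  · intro i
    induction i using Fin.cases with
    | zero => simpa using hMU
    | succ i => simpa using (hsub i).trans Set.diff_subset
  · intro v hv
    by_cases hvM : v ∈ M
    · refine ⟨0, by simpa using hvM, ?_⟩
      intro j hj
      induction j using Fin.cases with
      | zero => rfl
      | succ j => exact absurd hvM (fun _ => ((hsub j) (by simpa using hj)).2 hvM)
    · obtain ⟨j, hj, huniq⟩ := hpart v ⟨hv, hvM⟩
      refine ⟨j.succ, by simpa using hj, ?_⟩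
      intro i hi
      induction i using Fin.cases with
      | zero => exact absurd (by simpa using hi) hvM
      | succ i => simp only [Fin.cases_succ] at hi; rw [huniq i hi]
  · intro i
    induction i using Fin.cases with
    | zero => simpa using hMind
    | succ i => simpa using hind i
  · intro i j hij v hvj hvi
    induction i using Fin.cases with
    | zero =>
      simp only [Fin.cases_zero] at hvi
      induction j using Fin.cases with
      | zero => exact absurd (by simpa using hvj) hvi
      | succ j =>
        simp only [Fin.cases_zero]
        exact hdom v ((hsub j (by simpa using hvj)).1) hvi
    | succ i =>
      induction j using Fin.cases with
      | zero => exact absurd (Fin.le_zero_iff.mp hij) (Fin.succ_ne_zero i)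
      | succ j =>
        simp only [Fin.cases_succ] at hvj hvi ⊢
        exact hmax i j (by simpa using hij) v hvj hvi

/-- Every vertex set of a finite graph admits a covering. -/
lemma exists_covering {V : Type*} [Fintype V] (G : SimpleGraph V) :
    ∀ (n : ℕ) (U : Set V), U.ncard ≤ n →
      ∃ (k : ℕ) (I : Fin k → Set V), IsCoveringOn G U I := by
  intro n
  induction n with
  | zero =>
    intro U hU
    have hUe : U = ∅ := by
      have := Set.ncard_eq_zero (Set.toFinite U) |>.mp (Nat.le_zero.mp hU)
      exact this
    refine ⟨0, Fin.elim0, ?_⟩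
    refine ⟨fun i => i.elim0, fun i => i.elim0, ?_, fun i => i.elim0, fun i => i.elim0⟩
    intro v hv
    rw [hUe] at hv
    exact absurd hv (Set.notMem_empty v)
  | succ n ih =>
    intro U hU
    rcases Set.eq_empty_or_nonempty U with rfl | ⟨u, hu⟩
    · exact ih ∅ (by simp)
    · -- pick a maximal nonempty independent subset of U
      set C : Set (Set V) :=
        {M | M ⊆ U ∧ M.Nonempty ∧ ∀ v ∈ M, ∀ w ∈ M, ¬ G.Adj v w} with hC
      have hCne : C.Nonempty := ⟨{u}, by
        refine ⟨by simpa using hu, ⟨u, rfl⟩, ?_⟩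
        rintro v rfl w rfl
        simp⟩
      obtain ⟨M, hMC, hMmax⟩ :=
        Set.Finite.exists_maximalFor id C (Set.toFinite C) hCne
      obtain ⟨hMU, hMne, hMind⟩ := hMC
      have hdom : ∀ v ∈ U, v ∉ M → ∃ w ∈ M, G.Adj v w := by
        intro v hvU hvM
        by_contra hcon
        push_neg at hcon
        have hmem : insert v M ∈ C := by
          refine ⟨Set.insert_subset hvU hMU, ⟨v, Set.mem_insert v M⟩, ?_⟩
          intro a ha b hb
          rcases ha with rfl | ha <;> rcases hb with rfl | hb
          · simp
          · exact hcon b hb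
          · exact fun h => hcon a ha h.symm
          · exact hMind a ha b hb
        have := hMmax hmem (Set.subset_insert v M)
        simp only [id] at this
        exact hvM (this (Set.mem_insert v M))
      have hlt : (U \ M).ncard ≤ n := by
        obtain ⟨x, hx⟩ := hMne
        have hss : U \ M ⊂ U := by
          rw [Set.ssubset_def]
          exact ⟨Set.diff_subset, fun h => (h (hMU hx)).2 hx⟩
        have h1 : (U \ M).ncard < U.ncard := Set.ncard_lt_ncard hss (Set.toFinite U)
        omega
      obtain ⟨m, J, hJ⟩ := ih (U \ M) hlt
      exact ⟨m + 1, _, prepend_covering G U M hMU hMne hMind hdom hJ⟩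

/-- A covering of `S` extends to a covering of any superset `U`. -/
lemma extend_covering {V : Type*} [Fintype V] (G : SimpleGraph V) :
    ∀ (k : ℕ) (U S : Set V), S ⊆ U → ∀ (I : Fin k → Set V), IsCoveringOn G S I →
      ∃ k' : ℕ, k ≤ k' ∧ ∃ J : Fin k' → Set V, IsCoveringOn G U J := by
  intro k
  induction k with
  | zero =>
    intro U S _ I _
    obtain ⟨m, J, hJ⟩ := exists_covering G U.ncard U le_rfl
    exact ⟨m, Nat.zero_le m, J, hJ⟩
  | succ k ih =>
    intro U S hSU I hI
    obtain ⟨hne, hsub, hpart, hind, hmax⟩ := hI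
    -- maximal independent extension of I 0 into U \ S
    set C : Set (Set V) :=
      {M | I 0 ⊆ M ∧ M ⊆ I 0 ∪ (U \ S) ∧ ∀ v ∈ M, ∀ w ∈ M, ¬ G.Adj v w} with hC
    have hCne : C.Nonempty := ⟨I 0, subset_rfl, Set.subset_union_left, hind 0⟩
    obtain ⟨M, hMC, hMmax⟩ :=
      Set.Finite.exists_maximalFor id C (Set.toFinite C) hCne
    obtain ⟨hI0M, hMsub, hMind⟩ := hMC
    have hMU : M ⊆ U := hMsub.trans (Set.union_subset ((hsub 0).trans hSU) Set.diff_subset)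
    have hMS : ∀ v ∈ M, v ∉ I 0 → v ∉ S := by
      intro v hv hv0 hvS
      rcases hMsub hv with h | h
      exacts [hv0 h, h.2 hvS]
    have hdom : ∀ v ∈ U, v ∉ M → ∃ w ∈ M, G.Adj v w := by
      intro v hvU hvM
      by_cases hvS : v ∈ S
      · obtain ⟨j, hj, _⟩ := hpart v hvS
        obtain ⟨w, hw, hadj⟩ := hmax 0 j (Fin.zero_le j) v hj (fun h => hvM (hI0M h))
        exact ⟨w, hI0M hw, hadj⟩
      · by_contra hcon
        push_neg at hcon
        have hmem : insert v M ∈ C := by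
          refine ⟨hI0M.trans (Set.subset_insert v M), ?_, ?_⟩
          · exact Set.insert_subset (Set.mem_union_right _ ⟨hvU, hvS⟩) hMsub
          · intro a ha b hb
            rcases ha with rfl | ha <;> rcases hb with rfl | hb
            · simp
            · exact hcon b hb
            · exact fun h => hcon a ha h.symm
            · exact hMind a ha b hb
        have := hMmax hmem (Set.subset_insert v M)
        simp only [id] at this
        exact hvM (this (Set.mem_insert v M))
    -- the tail is a covering of S \ I 0
    have htail : IsCoveringOn G (S \ I 0) (fun i : Fin k => I i.succ) := by
      refine ⟨fun i => hne i.succ, ?_, ?_, fun i => hind i.succ, ?_⟩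
      · intro i v hv
        refine ⟨hsub i.succ hv, fun h0 => ?_⟩
        obtain ⟨j, hj, huniq⟩ := hpart v (hsub i.succ hv)
        have h1 := huniq _ hv
        have h2 := huniq _ h0
        exact (Fin.succ_ne_zero i) (h1.trans h2.symm)
      · intro v hv
        obtain ⟨j, hj, huniq⟩ := hpart v hv.1
        have hj0 : j ≠ 0 := fun h => hv.2 (h ▸ hj)
        obtain ⟨j', rfl⟩ := Fin.exists_succ_eq.mpr hj0
        refine ⟨j', hj, fun i hi => Fin.succ_injective k (huniq _ hi)⟩
      · intro i j hij v hvj hvi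
        exact hmax i.succ j.succ (Fin.succ_le_succ_iff.mpr hij) v hvj hvi
    have htailsub : S \ I 0 ⊆ U \ M := by
      intro v hv
      refine ⟨hSU hv.1, fun hvM => ?_⟩
      exact hMS v hvM hv.2 hv.1
    obtain ⟨k', hk', J, hJ⟩ := ih (U \ M) (S \ I 0) htailsub _ htail
    refine ⟨k' + 1, by omega, _,
      prepend_covering G U M hMU ((hne 0).mono hI0M) hMind hdom hJ⟩

/-- If `H` is the induced subgraph of `G` on a set `S` of
vertices, then every covering of `H` with `k` sets yields a covering of `G`
with at least `k` sets; equivalently `χ̇(H) ≤ χ̇(G)`. -/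
theorem chiDot_induced_le {V : Type*} [Fintype V]
    (G : SimpleGraph V) (S : Set V) :
    (∀ (k : ℕ) (I : Fin k → Set V), IsCoveringOn G S I →
      ∃ k' : ℕ, k ≤ k' ∧ ∃ J : Fin k' → Set V, IsCoveringOn G Set.univ J) ∧
      chiDotOn G S ≤ chiDotOn G Set.univ := by
  have hext := fun k I hI =>
    extend_covering G k Set.univ S (Set.subset_univ S) I hI
  refine ⟨hext, ?_⟩
  -- boundedness of the target set
  have hbdd : BddAbove {k | ∃ I : Fin k → Set V, IsCoveringOn G Set.univ I} := by
    refine ⟨Fintype.card V, ?_⟩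
    rintro k ⟨I, hne, _, hpart, _, _⟩
    choose f hf using hne
    have hinj : Function.Injective f := by
      intro i j hij
      obtain ⟨l, _, huniq⟩ := hpart (f i) (Set.mem_univ _)
      exact (huniq i (hf i)).trans ((huniq j (hij ▸ hf j))).symm
    simpa using Fintype.card_le_of_injective f hinj
  rcases Set.eq_empty_or_nonempty {k | ∃ I : Fin k → Set V, IsCoveringOn G S I} with
    he | hne
  · rw [chiDotOn, he, csSup_empty]
    exact Nat.zero_le _
  · refine csSup_le hne ?_
    rintro k ⟨I, hI⟩
    obtain ⟨k', hk', J, hJ⟩ := hext k I hI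
    exact hk'.trans (le_csSup hbdd ⟨J, hJ⟩)
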